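/- Let ε, Z, X be random variables with ε and Z independent, Z ≥ 0 a.s., ε regularly varying with tail index θ > 0, and suppose lim_{v→∞} P(Z > v)/P(ε > v) = c ∈ [0, ∞). Let λ ∈ ℝ be such that p := P(X > λ) < 1, and assume X is independent of ε. Then lim sup_{v→∞} P(X > λ ∣ ε + Z > v) ≤ (p + c)/(1 + c) < 1. -/

import Mathlib

open MeasureTheory ProbabilityTheory Filter Set

/-- Tail probability `P(X > x)` as a real number. -/
noncomputable def tailP {Ω : Type*} [MeasurableSpace Ω] (μ : Measure Ω) (X : Ω → ℝ) (x : ℝ) : ℝ :=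
  (μ {ω | x < X ω}).toReal

/-- `L` is slowly varying: `L(αx)/L(x) → 1` as `x → ∞`, for every `α > 0`. -/
def SlowlyVarying (L : ℝ → ℝ) : Prop :=
  ∀ α : ℝ, 0 < α → Tendsto (fun x => L (α * x) / L x) atTop (nhds 1)

/-- `X` is regularly varying with tail index `θ`: `P(X > x) = x^{-θ} L(x)` with `L` slowly varying. -/
def RegVarying {Ω : Type*} [MeasurableSpace Ω] (μ : Measure Ω) (X : Ω → ℝ) (θ : ℝ) : Prop :=
  ∃ L : ℝ → ℝ, SlowlyVarying L ∧ ∀ x : ℝ, 0 < x → tailP μ X x = x ^ (-θ) * L x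

/-- Conditional probability `P(A | B)` as a real number. -/
noncomputable def condP {Ω : Type*} [MeasurableSpace Ω] (μ : Measure Ω) (A B : Set Ω) : ℝ :=
  (μ (A ∩ B)).toReal / (μ B).toReal

/-- Conditional expectation `E[g | B]` as a real number. -/
noncomputable def condE {Ω : Type*} [MeasurableSpace Ω] (μ : Measure Ω) (B : Set Ω) (g : Ω → ℝ) : ℝ :=
  (∫ ω in B, g ω ∂μ) / (μ B).toReal

/-- Cumulative distribution function of `X`. -/
noncomputable def cdfR {Ω : Type*} [MeasurableSpace Ω] (μ : Measure Ω) (X : Ω → ℝ) (t : ℝ) : ℝ :=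
  (μ {ω | X ω ≤ t}).toReal

/-!
Let `F(v) = P(ε > v)` and `H(v) = P(ε + Z > v)`. Since `Z ≥ 0`, the event `{ε > v}` lies in
`{ε + Z > v}`, and on it the independence of `X` and `ε` gives
`P(X > λ, ε + Z > v) ≤ p F(v) + (H(v) - F(v))`, i.e. `P(X > λ ∣ ε + Z > v) ≤ 1 - (1 - p) F(v) / H(v)`.
It remains to show `limsup H(v) / F(v) ≤ 1 + c`. For `0 < β < 1`, an exceedance of `ε + Z` over
`v` forces `ε > βv`, `Z > βv`, or both `ε, Z > (1 - β)v`; by independence and regular variation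
this gives `limsup H / F ≤ β^{-θ} (1 + c)`, and `β → 1` concludes.
-/

open Topology

lemma SlowlyVarying.eventually_ne_zero {L : ℝ → ℝ} (hL : SlowlyVarying L) :
    ∀ᶠ x in atTop, L x ≠ 0 := by
  filter_upwards [(hL 1 one_pos).eventually_ne one_ne_zero] with x hx h0
  simp [h0] at hx

section Tail

variable {Ω : Type*} [MeasurableSpace Ω] {μ : Measure Ω}

lemma tailP_nonneg (X : Ω → ℝ) (x : ℝ) : 0 ≤ tailP μ X x := ENNReal.toReal_nonneg

lemma tendsto_tailP_atTop_zero [IsFiniteMeasure μ] {W : Ω → ℝ} (hW : Measurable W) :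
    Tendsto (tailP μ W) atTop (𝓝 0) := by
  have h := tendsto_measure_iInter_atTop (μ := μ) (s := fun v : ℝ => {ω | v < W ω})
    (fun v => (measurableSet_lt measurable_const hW).nullMeasurableSet)
    (fun a b hab ω hω => hab.trans_lt hω) ⟨0, measure_ne_top μ _⟩
  have hempty : (⋂ v : ℝ, {ω | v < W ω}) = ∅ :=
    eq_empty_of_forall_notMem fun ω hω => lt_irrefl (W ω) (mem_iInter.1 hω (W ω))
  rw [hempty, measure_empty] at h
  exact (ENNReal.tendsto_toReal ENNReal.zero_ne_top).comp h

lemma ProbabilityTheory.IndepFun.toReal_measure_inter_tail {W V : Ω → ℝ} (h : IndepFun W V μ)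
    (s t : ℝ) :
    (μ ({ω | s < W ω} ∩ {ω | t < V ω})).toReal = tailP μ W s * tailP μ V t := by
  rw [tailP, tailP, ← ENNReal.toReal_mul]
  exact congrArg ENNReal.toReal
    (h.measure_inter_preimage_eq_mul (Ioi s) (Ioi t) measurableSet_Ioi measurableSet_Ioi)

lemma tailP_add_le [IsFiniteMeasure μ] {W V : Ω → ℝ} (h : IndepFun W V μ) (a b : ℝ) :
    tailP μ (W + V) (a + b) ≤ tailP μ W a + tailP μ V a + tailP μ W b * tailP μ V b := by
  have hsub : {ω | a + b < (W + V) ω} ⊆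
      ({ω | a < W ω} ∪ {ω | a < V ω}) ∪ ({ω | b < W ω} ∩ {ω | b < V ω}) := by
    intro ω hω
    simp only [Pi.add_apply, mem_ofPred_eq, mem_union, mem_inter_iff] at hω ⊢
    by_cases hW : a < W ω
    · exact Or.inl (Or.inl hW)
    by_cases hV : a < V ω
    · exact Or.inl (Or.inr hV)
    exact Or.inr ⟨by linarith, by linarith⟩
  rw [← h.toReal_measure_inter_tail, tailP, tailP, tailP,
    ← ENNReal.toReal_add (measure_ne_top _ _) (measure_ne_top _ _),
    ← ENNReal.toReal_add (by finiteness) (measure_ne_top _ _)]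
  refine ENNReal.toReal_mono (by finiteness) ((measure_mono hsub).trans ?_)
  exact (measure_union_le _ _).trans (add_le_add_left (measure_union_le _ _) _)

lemma setOf_lt_ae_le_add {ε Z : Ω → ℝ} (hZ : ∀ᵐ ω ∂μ, 0 ≤ Z ω) (v : ℝ) :
    {ω | v < ε ω} ≤ᵐ[μ] {ω | v < (ε + Z) ω} := by
  filter_upwards [hZ] with ω hω hε
  change v < ε ω + Z ω
  linarith [show v < ε ω from hε]

lemma tailP_le_tailP_add [IsFiniteMeasure μ] {ε Z : Ω → ℝ} (hZ : ∀ᵐ ω ∂μ, 0 ≤ Z ω) (v : ℝ) :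
    tailP μ ε v ≤ tailP μ (ε + Z) v :=
  ENNReal.toReal_mono (measure_ne_top _ _) (measure_mono_ae (setOf_lt_ae_le_add hZ v))

lemma condP_le_one_sub [IsFiniteMeasure μ] {X ε Z : Ω → ℝ} (hXε : IndepFun X ε μ)
    (hε : Measurable ε) (hZ : ∀ᵐ ω ∂μ, 0 ≤ Z ω) (l v : ℝ) :
    condP μ {ω | l < X ω} {ω | v < (ε + Z) ω} ≤
      1 - (1 - tailP μ X l) * (tailP μ ε v / tailP μ (ε + Z) v) := by
  have hES := setOf_lt_ae_le_add (ε := ε) hZ v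
  have hdiff : (μ ({ω | v < (ε + Z) ω} \ {ω | v < ε ω})).toReal =
      tailP μ (ε + Z) v - tailP μ ε v := by
    rw [measure_sdiff' _ (measurableSet_lt measurable_const hε).nullMeasurableSet
        (measure_ne_top _ _), measure_congr (union_ae_eq_left_iff_ae_subset.mpr hES),
      ENNReal.toReal_sub_of_le (measure_mono_ae hES) (measure_ne_top _ _)]
    rfl
  have hnum : (μ ({ω | l < X ω} ∩ {ω | v < (ε + Z) ω})).toReal ≤
      tailP μ X l * tailP μ ε v + (tailP μ (ε + Z) v - tailP μ ε v) := by
    rw [← hXε.toReal_measure_inter_tail, ← hdiff,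
      ← ENNReal.toReal_add (measure_ne_top _ _) (measure_ne_top _ _)]
    refine ENNReal.toReal_mono (by finiteness) ((measure_mono ?_).trans (measure_union_le _ _))
    rintro ω ⟨hX, hS⟩
    by_cases hE : v < ε ω
    exacts [Or.inl ⟨hX, hE⟩, Or.inr ⟨hS, hE⟩]
  change _ / tailP μ (ε + Z) v ≤ _
  rcases (tailP_nonneg (μ := μ) (ε + Z) v).eq_or_lt with hH | hH
  · simp [← hH] -- both divisions by `H = 0` give `0`
  rw [div_le_iff₀ hH]
  have hrhs : (1 - (1 - tailP μ X l) * (tailP μ ε v / tailP μ (ε + Z) v)) * tailP μ (ε + Z) v =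
      tailP μ X l * tailP μ ε v + (tailP μ (ε + Z) v - tailP μ ε v) := by
    field_simp
    ring
  exact hrhs ▸ hnum

end Tail

namespace RegVarying

variable {Ω : Type*} [MeasurableSpace Ω] {μ : Measure Ω} {ε Z : Ω → ℝ} {θ c : ℝ}

lemma eventually_tailP_pos (hrv : RegVarying μ ε θ) : ∀ᶠ v in atTop, 0 < tailP μ ε v := by
  obtain ⟨L, hL, hrep⟩ := hrv
  filter_upwards [hL.eventually_ne_zero, eventually_gt_atTop 0] with v hLv hv
  refine (tailP_nonneg ε v).lt_of_ne' ?_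
  rw [hrep v hv]
  exact mul_ne_zero (Real.rpow_pos_of_pos hv _).ne' hLv

lemma tendsto_tailP_mul_div (hrv : RegVarying μ ε θ) {α : ℝ} (hα : 0 < α) :
    Tendsto (fun v => tailP μ ε (α * v) / tailP μ ε v) atTop (𝓝 (α ^ (-θ))) := by
  obtain ⟨L, hL, hrep⟩ := hrv
  have h := (hL α hα).const_mul (α ^ (-θ))
  rw [mul_one] at h
  refine h.congr' ?_
  filter_upwards [eventually_gt_atTop 0] with v hv
  have hvθ := Real.rpow_pos_of_pos hv (-θ)
  rw [hrep v hv, hrep _ (mul_pos hα hv), Real.mul_rpow hα.le hv.le]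
  field_simp

lemma tendsto_tailP_mul_div_of_tendsto (hrv : RegVarying μ ε θ)
    (hc : Tendsto (fun v => tailP μ Z v / tailP μ ε v) atTop (𝓝 c)) {α : ℝ} (hα : 0 < α) :
    Tendsto (fun v => tailP μ Z (α * v) / tailP μ ε v) atTop (𝓝 (c * α ^ (-θ))) := by
  have hα' : Tendsto (fun v : ℝ => α * v) atTop atTop := tendsto_id.const_mul_atTop hα
  refine ((hc.comp hα').mul (hrv.tendsto_tailP_mul_div hα)).congr' ?_
  filter_upwards [hα'.eventually hrv.eventually_tailP_pos] with v hv
  simp only [Function.comp_apply]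
  field_simp

lemma eventually_tailP_add_lt_of_lt [IsFiniteMeasure μ] (hrv : RegVarying μ ε θ)
    (hεZ : IndepFun ε Z μ) (hZ : Measurable Z)
    (hc : Tendsto (fun v => tailP μ Z v / tailP μ ε v) atTop (𝓝 c)) {β r : ℝ} (hβ0 : 0 < β)
    (hβ1 : β < 1) (hr : β ^ (-θ) * (1 + c) < r) :
    ∀ᶠ v in atTop, tailP μ (ε + Z) v < r * tailP μ ε v := by
  have hη : 0 < 1 - β := sub_pos.2 hβ1
  have hbound : Tendsto (fun v => tailP μ ε (β * v) / tailP μ ε v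
      + tailP μ Z (β * v) / tailP μ ε v
      + tailP μ ε ((1 - β) * v) / tailP μ ε v * tailP μ Z ((1 - β) * v)) atTop
      (𝓝 (β ^ (-θ) + c * β ^ (-θ) + (1 - β) ^ (-θ) * 0)) :=
    ((hrv.tendsto_tailP_mul_div hβ0).add (hrv.tendsto_tailP_mul_div_of_tendsto hc hβ0)).add
      ((hrv.tendsto_tailP_mul_div hη).mul
        ((tendsto_tailP_atTop_zero hZ).comp (tendsto_id.const_mul_atTop hη)))
  have hlim : β ^ (-θ) + c * β ^ (-θ) + (1 - β) ^ (-θ) * 0 < r := by linarith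
  filter_upwards [hrv.eventually_tailP_pos, hbound.eventually_lt_const hlim] with v hF hv
  rw [← div_lt_iff₀ hF]
  refine lt_of_le_of_lt ?_ hv
  have h := div_le_div_of_nonneg_right (tailP_add_le hεZ (β * v) ((1 - β) * v)) hF.le
  rwa [show β * v + (1 - β) * v = v by ring, add_div, add_div, mul_div_right_comm] at h

lemma eventually_tailP_add_lt [IsFiniteMeasure μ] (hrv : RegVarying μ ε θ)
    (hεZ : IndepFun ε Z μ) (hZ : Measurable Z)
    (hc : Tendsto (fun v => tailP μ Z v / tailP μ ε v) atTop (𝓝 c)) {r : ℝ} (hr : 1 + c < r) :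
    ∀ᶠ v in atTop, tailP μ (ε + Z) v < r * tailP μ ε v := by
  have hcont : Tendsto (fun β : ℝ => β ^ (-θ) * (1 + c)) (𝓝[<] 1) (𝓝 (1 + c)) := by
    simpa using ((Real.continuousAt_rpow_const 1 (-θ) (Or.inl one_ne_zero)).tendsto.mono_left
      nhdsWithin_le_nhds).mul_const (1 + c)
  obtain ⟨β, hβr, hβ⟩ := ((hcont.eventually (gt_mem_nhds hr)).and (Ioo_mem_nhdsLT one_pos)).exists
  exact hrv.eventually_tailP_add_lt_of_lt hεZ hZ hc hβ.1 hβ.2 hβr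

end RegVarying

theorem stmt_13_general {Ω : Type*} [MeasurableSpace Ω] (μ : Measure Ω) [IsProbabilityMeasure μ]
    (ε Z X : Ω → ℝ) (hε : Measurable ε) (hZ : Measurable Z)
    (hεZ : IndepFun ε Z μ) (hXε : IndepFun X ε μ)
    (hZnonneg : ∀ᵐ ω ∂μ, 0 ≤ Z ω)
    (θ : ℝ) (hrv : RegVarying μ ε θ)
    (c : ℝ) (hc0 : 0 ≤ c)
    (hc : Tendsto (fun v => tailP μ Z v / tailP μ ε v) atTop (nhds c))
    (l : ℝ) (hp : tailP μ X l < 1) :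
    (tailP μ X l + c) / (1 + c) < 1 ∧
    ∀ δ > 0, ∀ᶠ v in atTop,
      condP μ {ω | l < X ω} {ω | v < ε ω + Z ω} ≤ (tailP μ X l + c) / (1 + c) + δ := by
  have hp0 := tailP_nonneg (μ := μ) X l
  refine ⟨(div_lt_one (by linarith)).2 (by linarith), fun δ hδ => ?_⟩
  filter_upwards [hrv.eventually_tailP_pos,
    hrv.eventually_tailP_add_lt hεZ hZ hc (r := 1 + c + δ) (by linarith)] with v hF hH
  have hHpos : 0 < tailP μ (ε + Z) v := hF.trans_le (tailP_le_tailP_add hZnonneg v)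
  have hratio : (1 + c + δ)⁻¹ ≤ tailP μ ε v / tailP μ (ε + Z) v := by
    rw [le_div_iff₀ hHpos, inv_mul_le_iff₀ (by linarith)]
    exact hH.le
  calc condP μ {ω | l < X ω} {ω | v < ε ω + Z ω}
      ≤ 1 - (1 - tailP μ X l) * (tailP μ ε v / tailP μ (ε + Z) v) :=
        condP_le_one_sub hXε hε hZnonneg l v
    _ ≤ 1 - (1 - tailP μ X l) * (1 + c + δ)⁻¹ := by gcongr
    _ ≤ (tailP μ X l + c) / (1 + c) + δ := by
        rw [div_add' _ _ _ (by positivity), le_div_iff₀ (by positivity)]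
        have hq : (1 - tailP μ X l) * (1 + c + δ)⁻¹ * (1 + c + δ) = 1 - tailP μ X l := by
          field_simp
        have hq1 : (1 - tailP μ X l) * (1 + c + δ)⁻¹ ≤ 1 + c := by
          rw [← div_eq_mul_inv, div_le_iff₀ (by positivity)]
          nlinarith
        nlinarith

/-- if ε ⟂ Z, Z ≥ 0 a.s., ε regularly varying with index θ,
P(Z > v)/P(ε > v) → c ∈ [0,∞), X ⟂ ε and p = P(X > λ) < 1, then
limsup_v P(X > λ | ε + Z > v) ≤ (p + c)/(1 + c) < 1. -/
theorem stmt_13 {Ω : Type*} [MeasurableSpace Ω] (μ : Measure Ω) [IsProbabilityMeasure μ]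
    (ε Z X : Ω → ℝ) (hε : Measurable ε) (hZ : Measurable Z) (hXm : Measurable X)
    (hεZ : IndepFun ε Z μ) (hXε : IndepFun X ε μ)
    (hZnonneg : ∀ᵐ ω ∂μ, 0 ≤ Z ω)
    (θ : ℝ) (hθ : 0 < θ) (hrv : RegVarying μ ε θ)
    (c : ℝ) (hc0 : 0 ≤ c)
    (hc : Tendsto (fun v => tailP μ Z v / tailP μ ε v) atTop (nhds c))
    (l : ℝ) (hp : tailP μ X l < 1) :
    (tailP μ X l + c) / (1 + c) < 1 ∧
    ∀ δ > 0, ∀ᶠ v in atTop,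
      condP μ {ω | l < X ω} {ω | v < ε ω + Z ω} ≤ (tailP μ X l + c) / (1 + c) + δ :=
  stmt_13_general μ ε Z X hε hZ hεZ hXε hZnonneg θ hrv c hc0 hc l hp
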